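/- arXiv:1910.08180 — 6 statements merged into one kernel-verified Lean document; each statement's English description precedes it below -/
import Mathlib

section
/- Let N ∈ ℕ, let ρ(0), …, ρ(N) be positive reals, and for z ∈ ℂ define the truncated coherent state |z⟩ = 𝒩(|z|)^{-1/2} ∑_{n=0}^N (z^n/√ρ(n)) |n⟩ in ℂ^{N+1}, where 𝒩(|z|) = ∑_{n=0}^N |z|^{2n}/ρ(n). Fix r > 0 and let z_l = r e^{2πil/(N+1)} for l = 0,…,N. Then for each n with 0 ≤ n ≤ N, the number state |n⟩ equals (1/(N+1)) · (𝒩(r)·ρ(n))^{1/2} · r^{-n} · ∑_{l=0}^{N} e^{-2πinl/(N+1)} |z_l⟩. -/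
open Complex Real

lemma sum_exp_zmod (M : ℕ) (hM : 0 < M) (k : ℤ) :
    ∑ l ∈ Finset.range M, Complex.exp (2 * Real.pi * Complex.I * k * l / M)
      = if (M : ℤ) ∣ k then (M : ℂ) else 0 := by
  have hMne : (M : ℂ) ≠ 0 := Nat.cast_ne_zero.mpr hM.ne'
  have h2 : (2 * Real.pi * Complex.I) ≠ 0 := by
    simp [Real.pi_ne_zero, Complex.I_ne_zero]
  set w : ℂ := Complex.exp (2 * Real.pi * Complex.I * k / M) with hw
  have hterm : ∀ l ∈ Finset.range M,
      Complex.exp (2 * Real.pi * Complex.I * k * l / M) = w ^ l := by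
    intro l _
    rw [hw, ← Complex.exp_nat_mul]
    ring_nf
  rw [Finset.sum_congr rfl hterm]
  by_cases hd : (M : ℤ) ∣ k
  · rw [if_pos hd]
    obtain ⟨c, hc⟩ := hd
    have hw1 : w = 1 := by
      rw [hw, hc, Complex.exp_eq_one_iff]
      refine ⟨c, ?_⟩
      push_cast
      field_simp
    simp [hw1]
  · rw [if_neg hd]
    have hw1 : w ≠ 1 := by
      intro h
      rw [hw, Complex.exp_eq_one_iff] at h
      obtain ⟨c, hc⟩ := h
      apply hd
      refine ⟨c, ?_⟩
      field_simp at hc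
      have : (k : ℂ) = (M : ℂ) * c := by
        apply mul_left_cancel₀ h2
        linear_combination (2 * Real.pi * Complex.I) * hc
      exact_mod_cast this
    have hwM : w ^ M = 1 := by
      rw [hw, ← Complex.exp_nat_mul]
      have : (M : ℂ) * (2 * Real.pi * Complex.I * k / M) = k * (2 * Real.pi * Complex.I) := by
        field_simp
      rw [this, Complex.exp_int_mul_two_pi_mul_I]
    rw [geom_sum_eq hw1, hwM]
    simp

/-- Exact discrete circle representation: for positive moments `ρ(0),…,ρ(N)`, the
truncated coherent states `|z⟩ = 𝒩(|z|)^{-1/2} ∑_{n=0}^N (z^n/√ρ(n)) |n⟩` at the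
`N+1` points `z_l = r e^{2πil/(N+1)}` reconstruct every number state `|n⟩`:
`|n⟩ = (1/(N+1)) (𝒩(r) ρ(n))^{1/2} r^{-n} ∑_l e^{-2πinl/(N+1)} |z_l⟩`. -/
theorem discrete_circle_representation
    (N : ℕ) (ρ : ℕ → ℝ) (hρ : ∀ n ≤ N, 0 < ρ n)
    (𝒩 : ℝ → ℝ) (h𝒩 : ∀ x : ℝ, 𝒩 x = ∑ n ∈ Finset.range (N + 1), x ^ (2 * n) / ρ n)
    (Φ : ℂ → EuclideanSpace ℂ (Fin (N + 1)))
    (hΦ : ∀ z : ℂ, ∀ n : Fin (N + 1),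
      Φ z n = (Real.sqrt (𝒩 ‖z‖))⁻¹ * z ^ (n : ℕ) / Real.sqrt (ρ n))
    (r : ℝ) (hr : 0 < r)
    (n : Fin (N + 1))
    (ket : EuclideanSpace ℂ (Fin (N + 1)))
    (hket : ∀ m : Fin (N + 1), ket m = if m = n then 1 else 0) :
    ket = ((1 : ℂ) / (N + 1)) • ((Real.sqrt (𝒩 r * ρ n) : ℂ) * (r : ℂ) ^ (-(n : ℤ))) •
        ∑ l ∈ Finset.range (N + 1),
          Complex.exp (-2 * Real.pi * Complex.I * n * l / (N + 1)) •
            Φ (r * Complex.exp (2 * Real.pi * Complex.I * l / (N + 1))) := by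
  have hNne : ((N : ℂ) + 1) ≠ 0 := by
    exact_mod_cast (Nat.cast_ne_zero (R := ℂ)).mpr (Nat.succ_ne_zero N)
  have h𝒩r : 0 < 𝒩 r := by
    rw [h𝒩]
    apply Finset.sum_pos
    · intro i hi
      exact div_pos (pow_pos hr _) (hρ i (Nat.lt_succ_iff.mp (Finset.mem_range.mp hi)))
    · exact ⟨0, Finset.mem_range.mpr (Nat.succ_pos N)⟩
  have hρn : 0 < ρ n := hρ n (Nat.lt_succ_iff.mp n.isLt)
  have habs : ∀ l : ℕ,
      ‖(r : ℂ) * Complex.exp (2 * Real.pi * Complex.I * l / (N + 1))‖ = r := by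
    intro l
    rw [norm_mul, Complex.norm_exp]
    have : (2 * Real.pi * Complex.I * l / (N + 1)).re = 0 := by
      have : (2 * Real.pi * Complex.I * l / (N + 1)) =
          ((2 * Real.pi * l / (N + 1) : ℝ) : ℂ) * Complex.I := by
        push_cast; ring
      rw [this, Complex.re_ofReal_mul]
      simp
    rw [this]
    simp [abs_of_pos hr]
  ext m
  have hρm : 0 < ρ m := hρ m (Nat.lt_succ_iff.mp m.isLt)
  simp only [hket, PiLp.smul_apply, smul_eq_mul]
  rw [WithLp.ofLp_sum, Finset.sum_apply]
  simp only [PiLp.smul_apply, smul_eq_mul, hΦ, habs]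
  push_cast
  set C : ℂ := ((Real.sqrt (𝒩 r) : ℂ))⁻¹ * (r : ℂ) ^ (m : ℕ) / (Real.sqrt (ρ m) : ℂ) with hC
  have hterm : ∀ l ∈ Finset.range (N + 1),
      Complex.exp (-2 * Real.pi * Complex.I * n * l / (N + 1)) *
        (((Real.sqrt (𝒩 r) : ℂ))⁻¹ *
          ((r : ℂ) * Complex.exp (2 * Real.pi * Complex.I * l / (N + 1))) ^ (m : ℕ) /
          (Real.sqrt (ρ m) : ℂ))
      = C * Complex.exp (2 * Real.pi * Complex.I * (((m:ℕ):ℂ) - ((n:ℕ):ℂ)) * l / ((N:ℂ) + 1)) := by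
    intro l _
    have key : Complex.exp (-2 * Real.pi * Complex.I * n * l / (N + 1)) *
        Complex.exp ((m : ℕ) * (2 * Real.pi * Complex.I * l / (N + 1)))
        = Complex.exp (2 * Real.pi * Complex.I * (((m:ℕ):ℂ) - ((n:ℕ):ℂ)) * l / ((N:ℂ) + 1)) := by
      rw [← Complex.exp_add]
      congr 1
      field_simp
      ring
    rw [mul_pow, ← Complex.exp_nat_mul, ← key, hC]
    ring
  have hkey := sum_exp_zmod (N + 1) (Nat.succ_pos N) ((m : ℤ) - (n : ℤ))
  push_cast at hkey
  rw [Finset.sum_congr rfl hterm, ← Finset.mul_sum, hkey]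
  by_cases hmn : m = n
  · subst hmn
    rw [sub_self]
    simp only [dvd_zero, if_true, if_pos rfl]
    have hsq : Real.sqrt (𝒩 r * ρ m) = Real.sqrt (𝒩 r) * Real.sqrt (ρ m) :=
      Real.sqrt_mul h𝒩r.le _
    have h1 : Real.sqrt (𝒩 r) ≠ 0 := (Real.sqrt_pos.mpr h𝒩r).ne'
    have h2 : Real.sqrt (ρ m) ≠ 0 := (Real.sqrt_pos.mpr hρm).ne'
    have h1c : ((Real.sqrt (𝒩 r) : ℝ) : ℂ) ≠ 0 := by exact_mod_cast h1
    have h2c : ((Real.sqrt (ρ m) : ℝ) : ℂ) ≠ 0 := by exact_mod_cast h2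
    have hrc : (r : ℂ) ≠ 0 := by exact_mod_cast hr.ne'
    rw [hC, hsq, zpow_neg, zpow_natCast]
    push_cast
    field_simp
  · have hne : (m : ℕ) ≠ (n : ℕ) := fun h => hmn (Fin.ext h)
    have hnd : ¬ (((N : ℤ) + 1) ∣ ((m : ℤ) - (n : ℤ))) := by
      intro h
      have hm := m.isLt
      have hn := n.isLt
      have hne0 : ((m : ℤ) - (n : ℤ)) ≠ 0 := by
        intro h0
        exact hne (by omega)
      have h1 : ((N : ℤ) + 1) ∣ |(m : ℤ) - (n : ℤ)| := (dvd_abs _ _).mpr h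
      have h2 : (0 : ℤ) < |(m : ℤ) - (n : ℤ)| := abs_pos.mpr hne0
      have h3 := Int.le_of_dvd h2 h1
      have h4 : |(m : ℤ) - (n : ℤ)| < (N : ℤ) + 1 := abs_lt.mpr ⟨by omega, by omega⟩
      linarith
    rw [if_neg hnd, if_neg hmn]
    simp
end

section
/- Let ρ(n) > 0, k ≥ 1, z ∈ ℂ with F(x) := ∑_n x^n/ρ(n) convergent at x = |z|². Define |w⟩ = F(|w|²)^{-1/2} ∑_n (w^n/√ρ(n))|n⟩, and for 0 ≤ j < k let λ_j = (k/F(|z|²)) ∑_{ν=0}^∞ |z|^{2(νk+j)}/ρ(νk+j). Then ∑_{l=0}^{k-1} e^{-2πijl/k} ⟨z|z e^{2πil/k}⟩ = λ_j; i.e., the eigenvalues of the circulant Gram matrix G_{jl} = ⟨z e^{2πij/k} | z e^{2πil/k}⟩ are λ_0, …, λ_{k-1}. -/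
open Complex Real
open scoped InnerProductSpace

-- geometric sum of roots of unity
lemma aux_sum_root (k : ℕ) (hk : 0 < k) (d : ℤ) :
    ∑ l ∈ Finset.range k, Complex.exp (2*Real.pi*Complex.I*d/k) ^ l
      = if (k:ℤ) ∣ d then (k:ℂ) else 0 := by
  have hk0 : (k:ℂ) ≠ 0 := Nat.cast_ne_zero.2 hk.ne'
  set ζ : ℂ := Complex.exp (2*Real.pi*Complex.I*d/k) with hζ
  by_cases h : (k:ℤ) ∣ d
  · obtain ⟨m, rfl⟩ := h
    have h1 : ζ = 1 := by
      rw [hζ, show (2*(Real.pi:ℂ)*Complex.I*((k:ℤ)*m:ℤ)/k : ℂ) = (m:ℤ)*(2*Real.pi*Complex.I) by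
        push_cast; field_simp]
      exact Complex.exp_int_mul_two_pi_mul_I m
    simp [h1]
  · rw [if_neg h]
    have hζ1 : ζ ≠ 1 := by
      intro hone
      rw [hζ, Complex.exp_eq_one_iff] at hone
      obtain ⟨m, hm⟩ := hone
      apply h
      have hd : (d:ℂ) = m*k := by
        have h2 : (2*(Real.pi:ℂ)*Complex.I) * d = (2*(Real.pi:ℂ)*Complex.I) * (m*k) := by
          field_simp at hm; linear_combination (2*(Real.pi:ℂ)*Complex.I) * hm
        exact mul_left_cancel₀ Complex.two_pi_I_ne_zero h2
      refine ⟨m, ?_⟩; exact_mod_cast (by rw [hd]; ring : (d:ℂ) = (k:ℂ)*m)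
    have hζk : ζ ^ k = 1 := by
      rw [hζ, ← Complex.exp_nat_mul,
        show (k:ℂ) * (2*Real.pi*Complex.I*d/k) = (d:ℤ)*(2*Real.pi*Complex.I) by
          field_simp]
      exact Complex.exp_int_mul_two_pi_mul_I d
    rw [geom_sum_eq hζ1, hζk, sub_self, zero_div]


/-- DFT eigenvalues of the circulant Gram matrix of phase-rotated coherent states:
with `|w⟩ = F(|w|²)^{-1/2} ∑_n (w^n/√ρ(n))|n⟩` and
`λ_j = (k/F(|z|²)) ∑_ν |z|^{2(νk+j)}/ρ(νk+j)`, one has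
`∑_{l=0}^{k-1} e^{-2πijl/k} ⟨z|z e^{2πil/k}⟩ = λ_j`. -/
theorem gram_matrix_eigenvalues
    (ρ : ℕ → ℝ) (hρ : ∀ n, 0 < ρ n) (k : ℕ) (hk : 1 ≤ k)
    (z : ℂ) (hsum : Summable (fun n => ‖z‖ ^ (2 * n) / ρ n))
    (Freal : ℝ) (hFreal : Freal = ∑' n : ℕ, ‖z‖ ^ (2 * n) / ρ n)
    (Φ : ℂ → lp (fun _ : ℕ => ℂ) 2)
    (hΦ : ∀ w : ℂ, ∀ n : ℕ, (Φ w) n =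
      (Real.sqrt (∑' m : ℕ, ‖w‖ ^ (2 * m) / ρ m))⁻¹ * w ^ n / Real.sqrt (ρ n))
    (j : ℕ) (hj : j < k) :
    ∑ l ∈ Finset.range k,
        Complex.exp (-2 * Real.pi * Complex.I * j * l / k) *
          ⟪Φ z, Φ (z * Complex.exp (2 * Real.pi * Complex.I * l / k))⟫_ℂ
      = ((k / Freal) * ∑' ν : ℕ, ‖z‖ ^ (2 * (ν * k + j)) / ρ (ν * k + j) : ℝ) := by
  have hkpos : 0 < k := hk
  have hk0 : (k:ℂ) ≠ 0 := Nat.cast_ne_zero.2 hkpos.ne'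
  set A : ℕ → ℝ := fun n => ‖z‖ ^ (2 * n) / ρ n with hA
  have hAnonneg : ∀ n, 0 ≤ A n := fun n =>
    div_nonneg (pow_nonneg (norm_nonneg z) _) (hρ n).le
  have hF0 : 0 < Freal := by
    rw [hFreal]
    refine Summable.tsum_pos hsum hAnonneg 0 ?_
    simpa using div_pos one_pos (hρ 0)
  -- phase factor
  set ζ : ℕ → ℂ := fun n => Complex.exp (2*Real.pi*Complex.I*((n:ℤ)-(j:ℤ))/k) with hζ
  have hζabs : ∀ n, ‖ζ n‖ = 1 := by
    intro n
    show ‖Complex.exp (2*Real.pi*Complex.I*((n:ℤ)-(j:ℤ))/k)‖ = 1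
    rw [show (2*(Real.pi:ℂ)*Complex.I*((n:ℤ)-(j:ℤ))/k : ℂ)
        = ((2*Real.pi*((n:ℝ)-(j:ℝ))/k : ℝ) : ℂ) * Complex.I by push_cast; ring]
    exact Complex.norm_exp_ofReal_mul_I _
  -- per-l inner product computation
  have hinner : ∀ l : ℕ,
      Complex.exp (-2 * Real.pi * Complex.I * j * l / k) *
        ⟪Φ z, Φ (z * Complex.exp (2 * Real.pi * Complex.I * l / k))⟫_ℂ
      = (Freal:ℂ)⁻¹ * ∑' n : ℕ, ((A n : ℂ) * ζ n ^ l) := by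
    intro l
    set w : ℂ := z * Complex.exp (2 * Real.pi * Complex.I * l / k) with hw
    have habsw : ‖w‖ = ‖z‖ := by
      rw [hw, norm_mul, show (2*(Real.pi:ℂ)*Complex.I*l/k : ℂ)
          = ((2*Real.pi*l/k : ℝ):ℂ) * Complex.I by push_cast; ring,
        Complex.norm_exp_ofReal_mul_I, mul_one]
    have hFw : (∑' m : ℕ, ‖w‖ ^ (2 * m) / ρ m) = Freal := by
      rw [hFreal]; exact tsum_congr fun m => by rw [habsw]
    rw [lp.inner_eq_tsum, ← tsum_mul_left, ← tsum_mul_left]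
    refine tsum_congr fun n => ?_
    have hFz : (∑' m : ℕ, ‖z‖ ^ (2 * m) / ρ m) = Freal := hFreal.symm
    rw [RCLike.inner_apply, hΦ, hΦ, hFw, hFz]
    have hsq : (Real.sqrt Freal : ℂ) * (Real.sqrt Freal : ℂ) = (Freal : ℂ) := by
      rw [← Complex.ofReal_mul, Real.mul_self_sqrt hF0.le]
    have hsρ : (Real.sqrt (ρ n) : ℂ) * (Real.sqrt (ρ n) : ℂ) = (ρ n : ℂ) := by
      rw [← Complex.ofReal_mul, Real.mul_self_sqrt (hρ n).le]
    have hzz : (starRingEnd ℂ) (z ^ n) * z ^ n = ((‖z‖ ^ (2*n) : ℝ) : ℂ) := by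
      rw [map_pow, ← mul_pow, ← Complex.normSq_eq_conj_mul_self, Complex.normSq_eq_norm_sq]
      push_cast
      rw [← pow_mul]
    have hexp : Complex.exp (-2 * Real.pi * Complex.I * j * l / k) *
        Complex.exp (2 * Real.pi * Complex.I * l / k) ^ n
        = ζ n ^ l := by
      rw [hζ, ← Complex.exp_nat_mul, ← Complex.exp_nat_mul, ← Complex.exp_add]
      congr 1
      push_cast
      field_simp
      ring
    have hsρ0 : (Real.sqrt (ρ n) : ℂ) ≠ 0 := by
      simpa using (Real.sqrt_pos.2 (hρ n)).ne'
    have hsq0 : (Real.sqrt Freal : ℂ) ≠ 0 := by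
      simpa using (Real.sqrt_pos.2 hF0).ne'
    have hρ0 : (ρ n : ℂ) ≠ 0 := by exact_mod_cast (hρ n).ne'
    have hF0' : (Freal : ℂ) ≠ 0 := by exact_mod_cast hF0.ne'
    rw [hw, mul_pow]
    simp only [map_mul, map_div₀, map_inv₀, Complex.conj_ofReal]
    have hAc : (A n : ℂ) = ((‖z‖ ^ (2*n) : ℝ) : ℂ) / (ρ n : ℂ) := by
      rw [hA]; push_cast; ring
    rw [hAc, ← hexp, ← hzz]
    field_simp
    have h1 : ((1 / Real.sqrt Freal : ℝ) : ℂ) ^ 2 * (Freal : ℂ) = 1 := by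
      rw [← Complex.ofReal_pow, ← Complex.ofReal_mul, div_pow, Real.sq_sqrt hF0.le, one_pow,
        one_div, inv_mul_cancel₀ hF0.ne', Complex.ofReal_one]
    have h2 : (Real.sqrt (ρ n) : ℂ) ^ 2 = ρ n := by rw [sq, hsρ]
    rw [h2]
    linear_combination (z ^ n * (starRingEnd ℂ) (z ^ n) * (ρ n : ℂ)) * h1
  rw [Finset.sum_congr rfl fun l _ => hinner l, ← Finset.mul_sum]
  -- summability of each l-term
  have hsumml : ∀ l : ℕ, Summable (fun n : ℕ => (A n : ℂ) * ζ n ^ l) := by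
    intro l
    refine Summable.of_norm_bounded hsum fun n => ?_
    rw [norm_mul, norm_pow, hζabs, one_pow,
      mul_one, Complex.norm_real]
    exact le_of_eq (_root_.abs_of_nonneg (hAnonneg n))
  rw [← Summable.tsum_finsetSum fun l _ => hsumml l]
  -- evaluate the inner finite sum
  have hfin : ∀ n : ℕ, (∑ l ∈ Finset.range k, (A n : ℂ) * ζ n ^ l)
      = (A n : ℂ) * (if (k:ℤ) ∣ ((n:ℤ) - (j:ℤ)) then (k:ℂ) else 0) := by
    intro n
    rw [← Finset.mul_sum]
    congr 1
    have : ζ n = Complex.exp (2*Real.pi*Complex.I*(((n:ℤ)-(j:ℤ) : ℤ):ℂ)/k) := by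
      rw [hζ]; norm_num
    rw [this, aux_sum_root k hkpos ((n:ℤ) - (j:ℤ))]
  rw [tsum_congr hfin]
  -- reindex over the support
  set g : ℕ → ℂ := fun n => (A n : ℂ) * (if (k:ℤ) ∣ ((n:ℤ) - (j:ℤ)) then (k:ℂ) else 0) with hg
  have hinj : Function.Injective (fun ν : ℕ => ν * k + j) := by
    intro a b hab
    simp only at hab
    exact Nat.eq_of_mul_eq_mul_right hkpos (by omega)
  have hsupp : Function.support g ⊆ Set.range (fun ν : ℕ => ν * k + j) := by
    intro n hn
    rw [Function.mem_support, hg] at hn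
    by_cases hd : (k:ℤ) ∣ ((n:ℤ) - (j:ℤ))
    · obtain ⟨m, hm⟩ := hd
      have hkz : (0:ℤ) < k := by exact_mod_cast hkpos
      have hjz : (j:ℤ) < k := by exact_mod_cast hj
      have hnn : (0:ℤ) ≤ n := Int.natCast_nonneg n
      have hm0 : 0 ≤ m := by
        by_contra hneg
        push_neg at hneg
        have h1 : m * k ≤ -1 * k := mul_le_mul_of_nonneg_right (by omega) hkz.le
        linarith [hm]
      refine ⟨m.toNat, ?_⟩
      have htn : (m.toNat : ℤ) = m := Int.toNat_of_nonneg hm0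
      have : (n:ℤ) = m.toNat * k + j := by rw [htn]; linarith [hm]
      exact_mod_cast this.symm
    · simp [hd] at hn
  have hreind := (hinj.tsum_eq hsupp : ∑' ν : ℕ, g (ν * k + j) = ∑' n, g n)
  rw [← hreind]
  have hgval : ∀ ν : ℕ, g (ν * k + j) = (A (ν * k + j) : ℂ) * k := by
    intro ν
    rw [hg]
    simp only
    rw [if_pos ⟨(ν : ℤ), by push_cast; ring⟩]
  rw [tsum_congr hgval]
  have hsub : Summable fun ν : ℕ => A (ν * k + j) := hsum.comp_injective hinj
  rw [tsum_mul_right]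
  have : ((∑' ν : ℕ, A (ν * k + j) : ℝ) : ℂ) = ∑' ν : ℕ, ((A (ν * k + j) : ℝ) : ℂ) :=
    Complex.ofReal_tsum _
  rw [← this]
  have hts : (∑' ν : ℕ, ‖z‖ ^ (2*(ν*k+j)) / ρ (ν*k+j)) = ∑' ν : ℕ, A (ν*k+j) := rfl
  rw [hts, Complex.ofReal_mul, Complex.ofReal_div]
  push_cast
  field_simp
end

section
/- With notation as in the k-hypercat definition (ρ(n) > 0, F_j(x) = ∑_{n=0}^∞ x^{nk+j}/ρ(nk+j), F(x) = ∑_n x^n/ρ(n)), the k-hypercat satisfies |z;k,j⟩ = (1/k) · (F(|z|²)/F_j(|z|²))^{1/2} · ∑_{l=0}^{k-1} e^{-2πijl/k} |z e^{2πil/k}⟩, where |w⟩ = F(|w|²)^{-1/2} ∑_n (w^n/√ρ(n))|n⟩ is the normalized coherent state. -/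
open Complex Real

/-- The `k`-hypercat as an equally weighted superposition of phase-shifted coherent
states: `|z;k,j⟩ = (1/k)(F(|z|²)/F_j(|z|²))^{1/2} ∑_{l=0}^{k-1} e^{-2πijl/k} |z e^{2πil/k}⟩`,
where `|w⟩ = F(|w|²)^{-1/2} ∑_n (w^n/√ρ(n))|n⟩` and `F_j(x) = ∑_n x^{nk+j}/ρ(nk+j)`. -/
theorem k_hypercat_as_superposition
    (ρ : ℕ → ℝ) (hρ : ∀ n, 0 < ρ n) (k : ℕ) (hk : 1 ≤ k)
    (z : ℂ) (hsum : Summable (fun n => ‖z‖ ^ (2 * n) / ρ n))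
    (F Fj : ℝ → ℝ)
    (hF : ∀ x : ℝ, F x = ∑' n : ℕ, x ^ n / ρ n)
    (j : ℕ) (hj : j < k)
    (hFj : ∀ x : ℝ, Fj x = ∑' n : ℕ, x ^ (n * k + j) / ρ (n * k + j))
    (Φ : ℂ → lp (fun _ : ℕ => ℂ) 2)
    (hΦ : ∀ w : ℂ, ∀ n : ℕ, (Φ w) n =
      (Real.sqrt (F (‖w‖ ^ 2)))⁻¹ * w ^ n / Real.sqrt (ρ n))
    (Ψ : lp (fun _ : ℕ => ℂ) 2)
    (hΨ : ∀ m : ℕ, Ψ m =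
      if m % k = j then (Real.sqrt (Fj (‖z‖ ^ 2)))⁻¹ * z ^ m / Real.sqrt (ρ m)
      else 0) :
    Ψ = ((1 : ℂ) / k) • (Real.sqrt (F (‖z‖ ^ 2) / Fj (‖z‖ ^ 2)) : ℂ) •
        ∑ l ∈ Finset.range k,
          Complex.exp (-2 * Real.pi * Complex.I * j * l / k) •
            Φ (z * Complex.exp (2 * Real.pi * Complex.I * l / k)) := by
  have hkC : (k : ℂ) ≠ 0 := Nat.cast_ne_zero.mpr (by omega)
  set x : ℝ := ‖z‖ ^ 2 with hxdef
  have hx0 : 0 ≤ x := sq_nonneg _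
  have hsum' : Summable (fun n => x ^ n / ρ n) := by
    have : (fun n => x ^ n / ρ n) = fun n => ‖z‖ ^ (2 * n) / ρ n := by
      funext n; rw [hxdef, ← pow_mul]
    rw [this]; exact hsum
  have hFpos : 0 < F x := by
    rw [hF]
    exact Summable.tsum_pos hsum' (fun n => div_nonneg (pow_nonneg hx0 n) (hρ n).le) 0
      (by simpa using div_pos one_pos (hρ 0))
  have habs : ∀ l : ℕ,
      ‖z * Complex.exp (2 * Real.pi * Complex.I * l / k)‖ = ‖z‖ := by
    intro l
    rw [norm_mul]
    have h1 : (2 * Real.pi * Complex.I * l / k) = ((2 * Real.pi * l / k : ℝ) : ℂ) * Complex.I := by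
      push_cast; ring
    rw [h1, Complex.norm_exp_ofReal_mul_I, mul_one]
  apply lp.ext
  funext m
  have hρm : (Real.sqrt (ρ m) : ℂ) ≠ 0 := by
    exact_mod_cast (Real.sqrt_pos.mpr (hρ m)).ne'
  -- coordinate of RHS
  set ζ : ℂ := Complex.exp (2 * Real.pi * Complex.I * ((m : ℂ) - j) / k) with hζdef
  have hcoord : (((1 : ℂ) / k) • (Real.sqrt (F x / Fj x) : ℂ) •
        ∑ l ∈ Finset.range k, Complex.exp (-2 * Real.pi * Complex.I * j * l / k) •
          Φ (z * Complex.exp (2 * Real.pi * Complex.I * l / k))) m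
      = ((1 : ℂ) / k) * (Real.sqrt (F x / Fj x) : ℂ) *
        (((Real.sqrt (F x) : ℂ))⁻¹ * z ^ m / (Real.sqrt (ρ m) : ℂ) *
          ∑ l ∈ Finset.range k, ζ ^ l) := by
    simp only [lp.coeFn_smul, Pi.smul_apply, lp.coeFn_sum, Finset.sum_apply, smul_eq_mul,
      Finset.mul_sum]
    apply Finset.sum_congr rfl
    intro l _
    rw [hΦ, habs, mul_pow, ← Complex.exp_nat_mul]
    have hkey : Complex.exp (-2 * Real.pi * Complex.I * j * l / k) *
        Complex.exp ((m : ℂ) * (2 * Real.pi * Complex.I * l / k)) = ζ ^ l := by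
      rw [hζdef, ← Complex.exp_nat_mul, ← Complex.exp_add]
      congr 1
      ring
    rw [← hkey]
    push_cast
    ring
  rw [hΨ m, hcoord]
  by_cases hm : m % k = j
  · -- ζ = 1, geometric sum equals k
    obtain ⟨d, hd⟩ : ∃ d : ℕ, m = d * k + j :=
      ⟨m / k, by rw [← hm, Nat.mul_comm]; exact (Nat.div_add_mod m k).symm⟩
    have hζ1 : ζ = 1 := by
      rw [hζdef]
      have : 2 * (Real.pi : ℂ) * Complex.I * ((m : ℂ) - j) / k = (d : ℤ) * (2 * Real.pi * Complex.I) := by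
        subst hd
        push_cast
        field_simp
        ring
      rw [this, Complex.exp_int_mul_two_pi_mul_I]
    rw [hζ1]
    simp only [one_pow, Finset.sum_const, Finset.card_range, nsmul_eq_mul, mul_one, if_pos hm]
    by_cases hxj : x ^ j = 0
    · -- degenerate: z = 0 and j ≠ 0, so z ^ m = 0 and everything vanishes
      have hj0 : j ≠ 0 := by intro h; rw [h, pow_zero] at hxj; exact one_ne_zero hxj
      have hm0 : m ≠ 0 := by
        rintro rfl; rw [Nat.zero_mod] at hm; exact hj0 hm.symm
      have hzm : z ^ m = 0 := by
        have hx : x = 0 := (pow_eq_zero_iff hj0).mp hxj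
        have habs0 : ‖z‖ = 0 := by
          rw [hxdef] at hx
          exact (pow_eq_zero_iff (two_ne_zero)).mp hx
        rw [norm_eq_zero.mp habs0, zero_pow hm0]
      rw [hzm]
      ring
    · have hFjpos : 0 < Fj x := by
        have hxjpos : 0 < x ^ j := lt_of_le_of_ne (pow_nonneg hx0 j) (Ne.symm hxj)
        rw [hFj]
        have hinj : Function.Injective (fun n : ℕ => n * k + j) := by
          intro a b h
          simp only at h
          have hab : a * k = b * k := by omega
          exact Nat.eq_of_mul_eq_mul_right (by omega) hab
        have hsub : Summable (fun n : ℕ => x ^ (n * k + j) / ρ (n * k + j)) := by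
          have := hsum'.comp_injective hinj
          exact this
        refine Summable.tsum_pos hsub (fun n => div_nonneg (pow_nonneg hx0 _) (hρ _).le) 0 ?_
        simpa using div_pos hxjpos (hρ j)
      have ha : Real.sqrt (F x) ≠ 0 := (Real.sqrt_pos.mpr hFpos).ne'
      have hb : Real.sqrt (Fj x) ≠ 0 := (Real.sqrt_pos.mpr hFjpos).ne'
      rw [Real.sqrt_div hFpos.le]
      have haC : (Real.sqrt (F x) : ℂ) ≠ 0 := by exact_mod_cast ha
      have hbC : (Real.sqrt (Fj x) : ℂ) ≠ 0 := by exact_mod_cast hb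
      push_cast
      field_simp
  · -- ζ ≠ 1, geometric sum vanishes
    have hζk : ζ ^ k = 1 := by
      rw [hζdef, ← Complex.exp_nat_mul]
      have : (k : ℂ) * (2 * Real.pi * Complex.I * ((m : ℂ) - j) / k) =
          ((((m : ℤ) - (j : ℤ)) : ℤ) : ℂ) * (2 * Real.pi * Complex.I) := by
        push_cast
        field_simp
      rw [this, Complex.exp_int_mul_two_pi_mul_I]
    have hζ1 : ζ ≠ 1 := by
      intro h1
      rw [hζdef, Complex.exp_eq_one_iff] at h1
      obtain ⟨n, hn⟩ := h1
      have h2πI : (2 : ℂ) * Real.pi * Complex.I ≠ 0 := by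
        simp [Real.pi_ne_zero, Complex.I_ne_zero]
      have hmj : (m : ℂ) - j = n * k := by
        field_simp at hn
        have := hn
        -- 2 * π * I * (m - j) = n * (2 * π * I) * k
        apply mul_left_cancel₀ h2πI
        linear_combination (2 * (Real.pi : ℂ) * Complex.I) * this
      have hmjZ : (m : ℤ) - (j : ℤ) = n * k := by exact_mod_cast hmj
      have hmod : (j : ℤ) % k = (m : ℤ) % k :=
        Int.modEq_iff_dvd.mpr ⟨n, by linear_combination hmjZ⟩
      have h1 : ((m % k : ℕ) : ℤ) = (m : ℤ) % k := by push_cast; ring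
      have h2 : (j : ℤ) % k = (j : ℤ) := Int.emod_eq_of_lt (by positivity) (by exact_mod_cast hj)
      exact hm (by exact_mod_cast h1.trans (hmod.symm.trans h2))
    rw [geom_sum_eq hζ1, hζk, sub_self, zero_div, if_neg hm]
    ring
end

section
/- Under the same setup, the k-hypercat |z;k,j⟩ = F_j(|z|²)^{-1/2} ∑_{n=0}^∞ (z^{nk+j}/√ρ(nk+j)) |nk+j⟩ with ρ(n) = n! f(n)!² is an eigenstate of a_f^k with eigenvalue z^k: a_f^k |z;k,j⟩ = z^k |z;k,j⟩, for each j = 0, …, k-1. -/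
open Complex Real

/-- The factorial `f(n)! = f(1)⋯f(n)`, with `f(0)! = 1`. -/
noncomputable def ffact (f : ℕ → ℝ) (n : ℕ) : ℝ := ∏ i ∈ Finset.range n, f (i + 1)

lemma ffact_pos (f : ℕ → ℝ) (hfpos : ∀ n, 1 ≤ n → 0 < f n) (n : ℕ) : 0 < ffact f n := by
  unfold ffact
  exact Finset.prod_pos fun i _ => hfpos _ (Nat.le_add_left 1 i)

lemma sqrt_rho_succ (f : ℕ → ℝ) (hfpos : ∀ n, 1 ≤ n → 0 < f n)
    (ρ : ℕ → ℝ) (hρ : ∀ n, ρ n = n.factorial * (ffact f n) ^ 2) (n : ℕ) :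
    Real.sqrt (ρ (n + 1)) = Real.sqrt (ρ n) * (Real.sqrt (n + 1) * f (n + 1)) := by
  have hf := hfpos (n + 1) (Nat.le_add_left 1 n)
  have h1 : ρ (n + 1) = ρ n * ((n + 1) * (f (n + 1)) ^ 2) := by
    rw [hρ, hρ]
    have : ffact f (n + 1) = ffact f n * f (n + 1) := Finset.prod_range_succ _ n
    rw [this, Nat.factorial_succ]
    push_cast
    ring
  rw [h1, Real.sqrt_mul, Real.sqrt_mul (by positivity)]
  · rw [Real.sqrt_sq hf.le]
  · rw [hρ]; positivity

lemma sqrt_rho_prod (f : ℕ → ℝ) (hfpos : ∀ n, 1 ≤ n → 0 < f n)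
    (ρ : ℕ → ℝ) (hρ : ∀ n, ρ n = n.factorial * (ffact f n) ^ 2) (n k : ℕ) :
    Real.sqrt (ρ (n + k)) =
      Real.sqrt (ρ n) * ∏ i ∈ Finset.range k, (Real.sqrt (n + i + 1) * f (n + i + 1)) := by
  induction k with
  | zero => simp
  | succ k ih =>
    rw [Finset.prod_range_succ, ← mul_assoc, ← ih, ← Nat.add_assoc,
      sqrt_rho_succ f hfpos ρ hρ (n + k)]
    push_cast
    ring_nf

/-- The `k`-hypercat `|z;k,j⟩ = F_j(|z|²)^{-1/2} ∑_n (z^{nk+j}/√ρ(nk+j)) |nk+j⟩`, with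
`ρ(n) = n! f(n)!²`, is an eigenstate of `a_f^k` with eigenvalue `z^k`, where
`a_f |n⟩ = √n f(n) |n-1⟩` acts termwise:
`(a_f^k ψ)(n) = (∏_{i=1}^k √(n+i) f(n+i)) ψ(n+k)`. -/
theorem k_hypercat_is_eigenstate_of_afk
    (f : ℕ → ℝ) (hfpos : ∀ n, 1 ≤ n → 0 < f n)
    (ρ : ℕ → ℝ) (hρ : ∀ n, ρ n = n.factorial * (ffact f n) ^ 2)
    (k : ℕ) (hk : 1 ≤ k) (j : ℕ) (hj : j < k)
    (z : ℂ) (hconv : Summable (fun n => ‖z‖ ^ (2 * n) / ρ n))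
    (Fj : ℝ → ℝ)
    (hFj : ∀ x : ℝ, Fj x = ∑' n : ℕ, x ^ (n * k + j) / ρ (n * k + j))
    (ψ : lp (fun _ : ℕ => ℂ) 2)
    (hψ : ∀ m : ℕ, ψ m =
      if m % k = j then
        (Real.sqrt (Fj (‖z‖ ^ 2)))⁻¹ * z ^ m / Real.sqrt (ρ m)
      else 0)
    (φ : lp (fun _ : ℕ => ℂ) 2)
    (hφ : ∀ n : ℕ, φ n =
      (∏ i ∈ Finset.range k, (Real.sqrt (n + i + 1) * f (n + i + 1) : ℂ)) * ψ (n + k)) :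
    φ = z ^ k • ψ := by
  have hmod : ∀ n : ℕ, (n + k) % k = n % k := fun n => Nat.add_mod_right n k
  apply lp.ext
  funext n
  have hsmul : (z ^ k • ψ) n = z ^ k * ψ n := rfl
  rw [hsmul, hφ n, hψ n, hψ (n + k), hmod n]
  by_cases h : n % k = j
  · simp only [h, if_pos rfl]
    have hρpos : ∀ m, 0 < ρ m := by
      intro m
      rw [hρ]
      have := ffact_pos f hfpos m
      positivity
    have hprod : (∏ i ∈ Finset.range k, (Real.sqrt (n + i + 1) * f (n + i + 1) : ℂ)) =
        ((Real.sqrt (ρ (n + k)) / Real.sqrt (ρ n) : ℝ) : ℂ) := by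
      rw [sqrt_rho_prod f hfpos ρ hρ n k]
      rw [mul_div_cancel_left₀ _ (Real.sqrt_pos.mpr (hρpos n)).ne']
      push_cast
      rfl
    rw [hprod]
    have h1 : (Real.sqrt (ρ (n + k)) : ℂ) ≠ 0 := by
      simpa using (Real.sqrt_pos.mpr (hρpos (n + k))).ne'
    have h2 : (Real.sqrt (ρ n) : ℂ) ≠ 0 := by
      simpa using (Real.sqrt_pos.mpr (hρpos n)).ne'
    push_cast
    field_simp
    linear_combination
  · simp [h]
end

section
/- Let N ∈ ℕ, f(n) > 0 for 1 ≤ n ≤ N, and define the truncated coherent state |z;f⟩ = 𝒩(|z|)^{-1/2} ∑_{n=0}^N (z^n/(√(n!) f(n)!)) |n⟩ with 𝒩(x) = ∑_{n=0}^N x^{2n}/(n! f(n)!²), and the truncated annihilation operator a_f |n⟩ = √n f(n) |n-1⟩ on ℂ^{N+1}. Then ‖a_f |z;f⟩ − z |z;f⟩‖² = 𝒩(|z|)^{-1} · |z|^{2(N+1)} / (N! f(N)!²), which is strictly less than |z|^{2(N+1)} / (N! f(N)!²). -/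
set_option maxHeartbeats 1000000

open Complex Real

/-- Truncated coherent states are almost eigenstates of the truncated annihilation
operator: `‖a_f|z;f⟩ − z|z;f⟩‖² = 𝒩(|z|)⁻¹ |z|^{2(N+1)}/(N! f(N)!²)`, which is
strictly less than `|z|^{2(N+1)}/(N! f(N)!²)`. -/
theorem truncated_CS_almost_eigenstate
    (N : ℕ) (hN : 1 ≤ N) (f : ℕ → ℝ) (hfpos : ∀ n, 1 ≤ n → n ≤ N → 0 < f n)
    (𝒩 : ℝ → ℝ)
    (h𝒩 : ∀ x : ℝ, 𝒩 x =
      ∑ n ∈ Finset.range (N + 1), x ^ (2 * n) / (n.factorial * (ffact f n) ^ 2))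
    (z : ℂ) (hz : z ≠ 0)
    (ψ : EuclideanSpace ℂ (Fin (N + 1)))
    (hψ : ∀ m : Fin (N + 1), ψ m =
      (Real.sqrt (𝒩 (‖z‖)))⁻¹ * z ^ (m : ℕ) /
        (Real.sqrt (m : ℕ).factorial * ffact f m))
    (aψ : EuclideanSpace ℂ (Fin (N + 1)))
    (haψ : ∀ m : Fin (N + 1), aψ m =
      if hm : (m : ℕ) < N then
        Real.sqrt ((m : ℕ) + 1) * f ((m : ℕ) + 1) * ψ ⟨(m : ℕ) + 1, by omega⟩
      else 0) :
    ‖aψ - z • ψ‖ ^ 2 =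
      (𝒩 (‖z‖))⁻¹ * ‖z‖ ^ (2 * (N + 1)) /
        (N.factorial * (ffact f N) ^ 2) ∧
    ‖aψ - z • ψ‖ ^ 2 <
      ‖z‖ ^ (2 * (N + 1)) / (N.factorial * (ffact f N) ^ 2) := by
  set x := ‖z‖ with hxdef
  have hxpos : 0 < x := norm_pos_iff.mpr hz
  have hffpos : ∀ n, n ≤ N → 0 < ffact f n := by
    intro n hn
    apply Finset.prod_pos
    intro i hi
    simp only [Finset.mem_range] at hi
    exact hfpos (i + 1) (by omega) (by omega)
  have h𝒩gt : 1 < 𝒩 x := by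
    rw [h𝒩]
    have h0 : (0 : ℕ) ∈ Finset.range (N + 1) := by simp
    have h1 : (1 : ℕ) ∈ Finset.range (N + 1) := by simp; omega
    have key := Finset.single_lt_sum (f := fun n =>
        x ^ (2 * n) / (n.factorial * (ffact f n) ^ 2)) (by omega : (1:ℕ) ≠ 0) h0 h1
      (by
        have := hfpos 1 le_rfl hN
        have hf1 : 0 < ffact f 1 := hffpos 1 hN
        positivity)
      (fun k _ _ => by
        have : 0 ≤ ffact f k ^ 2 := sq_nonneg _
        positivity)
    calc (1:ℝ) = x ^ (2 * 0) / ((0:ℕ).factorial * (ffact f 0) ^ 2) := by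
          simp [ffact]
      _ < _ := key
  have h𝒩pos : 0 < 𝒩 x := lt_trans one_pos h𝒩gt
  have hNlt : N < N + 1 := by omega
  -- the difference vector
  have hdiff : ∀ m : Fin (N + 1), (aψ - z • ψ) m =
      if (m : ℕ) = N then -(z * ψ m) else 0 := by
    intro m
    have hm : (aψ - z • ψ) m = aψ m - z * ψ m := by
      simp [PiLp.sub_apply, PiLp.smul_apply, smul_eq_mul]
    rw [hm, haψ m]
    by_cases hmN : (m : ℕ) < N
    · have hne : ¬ ((m : ℕ) = N) := by omega
      simp only [dif_pos hmN, if_neg hne]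
      rw [hψ m, hψ ⟨(m : ℕ) + 1, by omega⟩]
      have hfm1 : 0 < f ((m : ℕ) + 1) := hfpos _ (by omega) (by omega)
      have hffm : 0 < ffact f (m : ℕ) := hffpos _ (by omega)
      have hffsucc : ffact f ((m : ℕ) + 1) = ffact f (m : ℕ) * f ((m : ℕ) + 1) := by
        rw [ffact, Finset.prod_range_succ]; rfl
      have hfactsucc : Real.sqrt ((m : ℕ) + 1).factorial =
          Real.sqrt ((m : ℕ) + 1) * Real.sqrt (m : ℕ).factorial := by
        rw [Nat.factorial_succ, Nat.cast_mul, Real.sqrt_mul (by positivity)]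
        norm_num
      simp only
      rw [hffsucc, hfactsucc]
      have c1 : ((Real.sqrt ((m : ℕ) + 1) : ℝ) : ℂ) ≠ 0 := by
        rw [Complex.ofReal_ne_zero]
        positivity
      have c2 : ((f ((m : ℕ) + 1) : ℝ) : ℂ) ≠ 0 := by
        rw [Complex.ofReal_ne_zero]; exact hfm1.ne'
      have c3 : ((Real.sqrt (m : ℕ).factorial : ℝ) : ℂ) ≠ 0 := by
        rw [Complex.ofReal_ne_zero]
        have : (0:ℝ) < (m : ℕ).factorial := by positivity
        positivity
      have c4 : ((ffact f (m : ℕ) : ℝ) : ℂ) ≠ 0 := by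
        rw [Complex.ofReal_ne_zero]; exact hffm.ne'
      have c5 : ((Real.sqrt (𝒩 x) : ℝ) : ℂ) ≠ 0 := by
        rw [Complex.ofReal_ne_zero]
        positivity
      push_cast
      field_simp
      ring
    · have heq : (m : ℕ) = N := by omega
      simp only [dif_neg hmN, if_pos heq]
      ring
  -- value of the single surviving term
  have hffN : 0 < ffact f N := hffpos N le_rfl
  have hfacN : (0:ℝ) < (N.factorial : ℝ) := by positivity
  have hpsiN : ‖ψ ⟨N, hNlt⟩‖ =
      (Real.sqrt (𝒩 x))⁻¹ * x ^ N / (Real.sqrt N.factorial * ffact f N) := by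
    rw [hψ]
    simp only [norm_div, norm_mul, norm_inv, norm_pow,
      Complex.norm_real, Real.norm_eq_abs, map_mul, map_div₀, map_inv₀]
    rw [_root_.abs_of_nonneg (Real.sqrt_nonneg _),
      _root_.abs_of_nonneg (Real.sqrt_nonneg _), _root_.abs_of_pos hffN, ← hxdef]
  have hval : ‖-(z * ψ ⟨N, hNlt⟩)‖ ^ 2 =
      (𝒩 x)⁻¹ * x ^ (2 * (N + 1)) / (N.factorial * (ffact f N) ^ 2) := by
    rw [norm_neg, norm_mul, hpsiN, ← hxdef]
    have expand : (x * ((Real.sqrt (𝒩 x))⁻¹ * x ^ N /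
          (Real.sqrt (N.factorial) * ffact f N))) ^ 2
        = ((Real.sqrt (𝒩 x)) ^ 2)⁻¹ * (x * x ^ N) ^ 2 /
          ((Real.sqrt (N.factorial)) ^ 2 * (ffact f N) ^ 2) := by
      ring
    rw [expand, Real.sq_sqrt h𝒩pos.le, Real.sq_sqrt hfacN.le]
    have hx1 : x * x ^ N = x ^ (N + 1) := (pow_succ' x N).symm
    rw [hx1, ← pow_mul, Nat.mul_comm (N + 1) 2]
  -- the norm squared
  have hnorm : ‖aψ - z • ψ‖ ^ 2 =
      (𝒩 x)⁻¹ * x ^ (2 * (N + 1)) / (N.factorial * (ffact f N) ^ 2) := by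
    have hsumnn : 0 ≤ ∑ i, ‖(aψ - z • ψ) i‖ ^ 2 :=
      Finset.sum_nonneg fun i _ => sq_nonneg _
    rw [EuclideanSpace.norm_eq, Real.sq_sqrt hsumnn, ← hval]
    rw [Fintype.sum_eq_single (⟨N, hNlt⟩ : Fin (N + 1))]
    · rw [hdiff]
      simp
    · intro b hb
      rw [hdiff]
      have hb' : ¬ ((b : ℕ) = N) := fun h => hb (Fin.ext h)
      simp [hb']
  refine ⟨hnorm, ?_⟩
  rw [hnorm]
  have hpos : 0 < x ^ (2 * (N + 1)) / (N.factorial * (ffact f N) ^ 2) := by positivity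
  have hinv : (𝒩 x)⁻¹ < 1 := inv_lt_one_of_one_lt₀ h𝒩gt
  calc (𝒩 x)⁻¹ * x ^ (2 * (N + 1)) / (N.factorial * (ffact f N) ^ 2)
      = (𝒩 x)⁻¹ * (x ^ (2 * (N + 1)) / (N.factorial * (ffact f N) ^ 2)) := by ring
    _ < 1 * (x ^ (2 * (N + 1)) / (N.factorial * (ffact f N) ^ 2)) :=
        mul_lt_mul_of_pos_right hinv hpos
    _ = _ := by ring
end

section
/- For the truncated case with ρ(n) defined for 0 ≤ n ≤ N, let k divide N+1, and define the truncated k-hypercat |z;k,j⟩ = F_j(|z|²)^{-1/2} ∑_{n=0}^{(N+1−k)/k} (z^{nk+j}/√ρ(nk+j)) |nk+j⟩ with F_j(x) = ∑_{n=0}^{(N+1−k)/k} x^{nk+j}/ρ(nk+j), and the truncated coherent state |w⟩ = 𝒩(|w|)^{-1/2} ∑_{n=0}^N (w^n/√ρ(n))|n⟩ with 𝒩(x) = ∑_{n=0}^N x^{2n}/ρ(n). Then |z;k,j⟩ = (1/k)(𝒩(|z|)/F_j(|z|²))^{1/2} ∑_{l=0}^{k-1} e^{−2πijl/k} |z e^{2πil/k}⟩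 for each j = 0,…,k−1. -/
open Complex Real

/-- Geometric sum of `w^l` when `w^k = 1`. -/
lemma sum_pow_root_of_unity {w : ℂ} {k : ℕ} (hk : 1 ≤ k) (hwk : w ^ k = 1) :
    ∑ l ∈ Finset.range k, w ^ l = if w = 1 then (k : ℂ) else 0 := by
  split_ifs with h
  · simp [h]
  · rw [geom_sum_eq h, hwk]
    simp

/-- Truncated `k`-hypercats (with `k ∣ N+1`) as equally weighted superpositions of
phase-shifted truncated coherent states in `ℂ^{N+1}`:
`|z;k,j⟩ = (1/k)(𝒩(|z|)/F_j(|z|²))^{1/2} ∑_{l=0}^{k-1} e^{−2πijl/k} |z e^{2πil/k}⟩`. -/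
theorem truncated_k_hypercat_as_superposition
    (N : ℕ) (ρ : ℕ → ℝ) (hρ : ∀ n ≤ N, 0 < ρ n)
    (k : ℕ) (hk : 1 ≤ k) (hdvd : k ∣ N + 1) (j : ℕ) (hj : j < k)
    (z : ℂ) (hz : z ≠ 0)
    (𝒩 : ℝ → ℝ)
    (h𝒩 : ∀ x : ℝ, 𝒩 x = ∑ n ∈ Finset.range (N + 1), x ^ (2 * n) / ρ n)
    (Fj : ℝ → ℝ)
    (hFj : ∀ x : ℝ, Fj x =
      ∑ m ∈ Finset.range (N + 1), if m % k = j then x ^ m / ρ m else 0)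
    (Φ : ℂ → EuclideanSpace ℂ (Fin (N + 1)))
    (hΦ : ∀ w : ℂ, ∀ m : Fin (N + 1),
      Φ w m = (Real.sqrt (𝒩 (‖w‖)))⁻¹ * w ^ (m : ℕ) / Real.sqrt (ρ m))
    (Ψ : EuclideanSpace ℂ (Fin (N + 1)))
    (hΨ : ∀ m : Fin (N + 1), Ψ m =
      if (m : ℕ) % k = j then
        (Real.sqrt (Fj (‖z‖ ^ 2)))⁻¹ * z ^ (m : ℕ) / Real.sqrt (ρ m)
      else 0) :
    Ψ = ((1 : ℂ) / k) •
        (Real.sqrt (𝒩 (‖z‖) / Fj (‖z‖ ^ 2)) : ℂ) •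
        ∑ l ∈ Finset.range k,
          Complex.exp (-2 * Real.pi * Complex.I * j * l / k) •
            Φ (z * Complex.exp (2 * Real.pi * Complex.I * l / k)) := by
  have hkC : (k : ℂ) ≠ 0 := Nat.cast_ne_zero.mpr (by omega)
  have hkR : (k : ℝ) ≠ 0 := Nat.cast_ne_zero.mpr (by omega)
  have hkN : k ≤ N + 1 := Nat.le_of_dvd (Nat.succ_pos N) hdvd
  have hjN : j ≤ N := by omega
  have hzabs : (0 : ℝ) < ‖z‖ := by
    simpa using (norm_pos_iff.mpr hz)
  have hNpos : 0 < 𝒩 (‖z‖) := by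
    rw [h𝒩]
    refine Finset.sum_pos (fun n hn => ?_) ⟨0, Finset.mem_range.mpr (Nat.succ_pos N)⟩
    have := hρ n (Nat.lt_succ_iff.mp (Finset.mem_range.mp hn))
    positivity
  have hFpos : 0 < Fj (‖z‖ ^ 2) := by
    rw [hFj]
    refine Finset.sum_pos' (fun m hm => ?_) ⟨j, Finset.mem_range.mpr (by omega), ?_⟩
    · split_ifs with h
      · have := hρ m (Nat.lt_succ_iff.mp (Finset.mem_range.mp hm))
        positivity
      · exact le_rfl
    · rw [if_pos (Nat.mod_eq_of_lt hj)]
      have := hρ j hjN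
      positivity
  have hsqrtN : Real.sqrt (𝒩 (‖z‖)) ≠ 0 := by positivity
  have hsqrtF : Real.sqrt (Fj (‖z‖ ^ 2)) ≠ 0 := by positivity
  -- the absolute value of each phase-shifted coherent-state parameter
  have habs : ∀ l : ℕ,
      ‖z * Complex.exp (2 * Real.pi * Complex.I * l / k)‖ = ‖z‖ := by
    intro l
    rw [norm_mul, show (2 * Real.pi * Complex.I * l / k : ℂ)
        = ((2 * Real.pi * l / k : ℝ) : ℂ) * Complex.I by push_cast; ring,
      Complex.norm_exp_ofReal_mul_I, mul_one]
  ext m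
  rw [hΨ m]
  -- unfold the right-hand side at component `m`
  simp only [PiLp.smul_apply, smul_eq_mul]
  rw [show (∑ l ∈ Finset.range k,
      Complex.exp (-2 * Real.pi * Complex.I * j * l / k) •
        Φ (z * Complex.exp (2 * Real.pi * Complex.I * l / k))) m
    = ∑ l ∈ Finset.range k, (Complex.exp (-2 * Real.pi * Complex.I * j * l / k) •
        Φ (z * Complex.exp (2 * Real.pi * Complex.I * l / k))) m from
    by rw [WithLp.ofLp_sum, Finset.sum_apply]]
  simp only [PiLp.smul_apply, smul_eq_mul, hΦ, habs]
  -- rewrite each term of the sum in geometric form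
  set w : ℂ := Complex.exp ((((m : ℕ) : ℂ) - (j : ℂ)) * (2 * Real.pi * Complex.I / k)) with hw
  have hterm : ∀ l ∈ Finset.range k,
      Complex.exp (-2 * Real.pi * Complex.I * j * l / k) *
        ((Real.sqrt (𝒩 (‖z‖)))⁻¹ *
          (z * Complex.exp (2 * Real.pi * Complex.I * l / k)) ^ (m : ℕ) / Real.sqrt (ρ m))
      = ((Real.sqrt (𝒩 (‖z‖)))⁻¹ * z ^ (m : ℕ) / Real.sqrt (ρ m)) * w ^ l := by
    intro l _
    have h1 : Complex.exp (-2 * Real.pi * Complex.I * j * l / k) *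
        Complex.exp (2 * Real.pi * Complex.I * l / k) ^ (m : ℕ) = w ^ l := by
      rw [hw, ← Complex.exp_nat_mul, ← Complex.exp_nat_mul, ← Complex.exp_add]
      congr 1
      field_simp
      ring
    rw [mul_pow, ← h1]
    ring
  rw [Finset.sum_congr rfl hterm, ← Finset.mul_sum]
  have hwk : w ^ k = 1 := by
    rw [hw, ← Complex.exp_nat_mul,
      show (k : ℂ) * ((((m : ℕ) : ℂ) - (j : ℂ)) * (2 * Real.pi * Complex.I / k))
        = ((((m : ℕ) : ℤ) - (j : ℤ) : ℤ) : ℂ) * (2 * Real.pi * Complex.I) by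
        push_cast; field_simp]
    exact Complex.exp_int_mul_two_pi_mul_I _
  rw [sum_pow_root_of_unity hk hwk]
  by_cases hmj : (m : ℕ) % k = j
  · -- `w = 1` in this case
    have hjm : j ≤ (m : ℕ) := hmj ▸ Nat.mod_le _ _
    have hdvd' : (k : ℤ) ∣ ((m : ℕ) : ℤ) - (j : ℤ) := by
      refine ⟨((m : ℕ) / k : ℕ), ?_⟩
      have hmn : (m : ℕ) = k * ((m : ℕ) / k) + j := by
        conv_lhs => rw [← Nat.div_add_mod (m : ℕ) k, hmj]
      rw [show ((m : ℕ) : ℤ) = ((k * ((m : ℕ) / k) + j : ℕ) : ℤ) from congrArg _ hmn]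
      push_cast
      ring
    obtain ⟨q, hq⟩ := hdvd'
    have hw1 : w = 1 := by
      have hC : (((m : ℕ) : ℂ) - (j : ℂ)) = (k : ℂ) * (q : ℂ) := by exact_mod_cast hq
      rw [hw, show ((((m : ℕ) : ℂ) - (j : ℂ)) * (2 * Real.pi * Complex.I / k))
          = (q : ℤ) * (2 * Real.pi * Complex.I) by
        rw [hC]; push_cast; field_simp]
      exact Complex.exp_int_mul_two_pi_mul_I _
    rw [if_pos hmj, if_pos hw1]
    have hsq : (Real.sqrt (𝒩 (‖z‖) / Fj (‖z‖ ^ 2)) : ℝ)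
        = Real.sqrt (𝒩 (‖z‖)) / Real.sqrt (Fj (‖z‖ ^ 2)) :=
      Real.sqrt_div hNpos.le _
    rw [hsq]
    have hN' : ((Real.sqrt (𝒩 (‖z‖)) : ℝ) : ℂ) ≠ 0 := by
      exact_mod_cast hsqrtN
    have hF' : ((Real.sqrt (Fj (‖z‖ ^ 2)) : ℝ) : ℂ) ≠ 0 := by
      exact_mod_cast hsqrtF
    push_cast
    field_simp
  · -- `w ≠ 1` in this case
    have hw1 : w ≠ 1 := by
      intro hcon
      rw [hw, Complex.exp_eq_one_iff] at hcon
      obtain ⟨n, hn⟩ := hcon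
      have h2pi : (2 * Real.pi * Complex.I : ℂ) ≠ 0 := by
        simp [Real.pi_ne_zero, Complex.I_ne_zero]
      have hC : (((m : ℕ) : ℂ) - (j : ℂ)) = (n : ℂ) * (k : ℂ) :=
        mul_right_cancel₀ h2pi (by field_simp at hn; linear_combination (2 * Real.pi * Complex.I) * hn)
      have hZ : ((m : ℕ) : ℤ) - (j : ℤ) = n * k := by exact_mod_cast hC
      have hn0 : 0 ≤ n := by
        by_contra hneg
        push_neg at hneg
        have : ((m : ℕ) : ℤ) - (j : ℤ) ≤ -k := by
          calc ((m : ℕ) : ℤ) - (j : ℤ) = n * k := hZ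
          _ ≤ (-1) * k := by
            apply mul_le_mul_of_nonneg_right _ (by positivity)
            omega
          _ = -k := by ring
        omega
      have hnt : (n.toNat : ℤ) = n := Int.toNat_of_nonneg hn0
      have hmeq : (m : ℕ) = n.toNat * k + j := by
        have : ((m : ℕ) : ℤ) = (n.toNat : ℤ) * k + j := by rw [hnt]; omega
        exact_mod_cast this
      rw [hmeq, add_comm, Nat.add_mul_mod_self_right] at hmj
      exact hmj (Nat.mod_eq_of_lt hj)
    rw [if_neg hmj, if_neg hw1]
    ring
end
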